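/- Let S be a state space, D a decision space, T : S×D → S, and g : S×D → ℝ, G : S×D×ℝ → ℝ bounded functions. Define A : B(S) → B(S) by (Ah)(x) = sup_{y∈D}[g(x,y) + G(x,y,h(T(x,y)))]. Suppose there exist r ∈ [0,1) and ψ ∈ Ψ such that for all h,ℓ ∈ B(S), the inequality φ(r)·∫_0^{‖h−Ah‖} ψ'(t)dt ≤ ψ(‖h−ℓ‖) implies that for every (x,y) ∈ S×D, ψ(|G(x,y,h(T(x,y))) − G(x,y,ℓ(T(x,y)))|) ≤ r·max{∫_0^{‖h−ℓ‖} ψ', ∫_0^{‖h−Ah‖} ψ', ∫_0^{‖ℓ−Aℓ‖} ψ', ∫_0^{(‖h−Aℓ‖+‖ℓ−Ah‖)/2} ψ'}. Then the functional equation f(x) = sup_{y∈D}[g(x,y) + G(x,y,f(T(x,y)))] has a unique bounded solution f on S. -/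

import Mathlib

open MeasureTheory Metric Set
open Filter Topology

noncomputable def phi (r : ℝ) : ℝ := if r < 1/2 then 1 else 1 - r

def PsiClass (ψ : ℝ → ℝ) : Prop :=
  (∀ s t : ℝ, 0 ≤ s → 0 ≤ t → ψ (s + t) ≤ ψ s + ψ t) ∧
  (∀ s t : ℝ, 0 ≤ s → s ≤ t → ψ s ≤ ψ t) ∧
  ContinuousOn ψ (Ici 0) ∧
  (∀ t : ℝ, 0 < t → t ≤ ψ t) ∧
  (∀ t : ℝ, 0 ≤ t → (ψ t = 0 ↔ t = 0))

/-- The Lebesgue integral `∫₀^a ψ'(t) dt` of the a.e. derivative of `ψ`. -/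
noncomputable def psint (ψ : ℝ → ℝ) (a : ℝ) : ℝ := ∫ t in (0:ℝ)..a, deriv ψ t

/-- Nonempty closed bounded subset (member of `CB(X)`). -/
def IsCB {X : Type*} [MetricSpace X] (A : Set X) : Prop :=
  A.Nonempty ∧ IsClosed A ∧ Bornology.IsBounded A

/-- `T` is an `(r, φ, ψ)`-Suzuki integral contraction. -/
def SuzukiIntegral {X : Type*} [MetricSpace X] (T : X → Set X) (r : ℝ) (ψ : ℝ → ℝ) : Prop :=
  ∀ x y : X,
    phi r * psint ψ (infDist x (T x)) ≤ ψ (dist x y) →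
    ψ (hausdorffDist (T x) (T y)) ≤
      r * max (max (psint ψ (dist x y)) (psint ψ (infDist x (T x))))
              (max (psint ψ (infDist y (T y)))
                   (psint ψ ((infDist x (T y) + infDist y (T x)) / 2)))

/-- The sup norm distance between two bounded functions on `S`. -/
noncomputable def supDist {S : Type*} (h ℓ : S → ℝ) : ℝ := ⨆ x : S, |h x - ℓ x|

/-! ### Auxiliary lemmas -/

lemma psint_bounds {ψ : ℝ → ℝ} (hψ : PsiClass ψ) {a : ℝ} (ha : 0 ≤ a) :
    0 ≤ psint ψ a ∧ psint ψ a ≤ ψ a := by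
  obtain ⟨hsub, hmono, hcont, hge, hzero⟩ := hψ
  have hψ0 : ψ 0 = 0 := (hzero 0 le_rfl).mpr rfl
  set F : ℝ → ℝ := fun t => ψ (max t 0) with hF
  have hFmono : Monotone F := fun s t hst =>
    hmono _ _ (le_max_right _ _) (max_le_max hst le_rfl)
  have hFcont : Continuous F :=
    hcont.comp_continuous (continuous_id.max continuous_const) (fun t => le_max_right t 0)
  have hFeq : ∀ t : ℝ, 0 < t → deriv ψ t = deriv F t := by
    intro t ht
    apply Filter.EventuallyEq.deriv_eq
    filter_upwards [Ioi_mem_nhds ht] with s hs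
    simp [hF, max_eq_left (le_of_lt (mem_Ioi.mp hs))]
  set μ := hFmono.stieltjesFunction.measure with hμ
  have hsf : ∀ x, hFmono.stieltjesFunction x = F x := by
    intro x
    rw [hFmono.stieltjesFunction_eq]
    exact hFmono.continuousWithinAt_Ioi_iff_rightLim_eq.mp
      hFcont.continuousAt.continuousWithinAt
  have hμIoc : μ (Ioc 0 a) = ENNReal.ofReal (ψ a) := by
    rw [hμ, StieltjesFunction.measure_Ioc, hsf, hsf]
    have : F 0 = 0 := by simp [hF, hψ0]
    have ha' : F a = ψ a := by simp [hF, max_eq_left ha]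
    rw [this, ha', sub_zero]
  have hd : ∀ᵐ t, deriv F t = (μ.rnDeriv volume t).toReal := by
    filter_upwards [hFmono.ae_hasDerivAt] with t ht using ht.deriv
  have hint : psint ψ a = ∫ t in Ioc (0:ℝ) a, (μ.rnDeriv volume t).toReal := by
    rw [psint, intervalIntegral.integral_of_le ha]
    rw [setIntegral_congr_fun measurableSet_Ioc (fun t ht => hFeq t ht.1)]
    exact setIntegral_congr_ae measurableSet_Ioc (hd.mono fun t h _ => h)
  have hσ : SigmaFinite μ := by infer_instance
  constructor
  · rw [hint]
    exact setIntegral_nonneg measurableSet_Ioc fun t _ => ENNReal.toReal_nonneg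
  · rw [hint]
    have h1 : ∫ t in Ioc (0:ℝ) a, (μ.rnDeriv volume t).toReal =
        (∫⁻ t in Ioc (0:ℝ) a, μ.rnDeriv volume t).toReal := by
      apply integral_toReal
      · exact (Measure.measurable_rnDeriv μ volume).aemeasurable.restrict
      · exact ae_restrict_of_ae (Measure.rnDeriv_lt_top μ volume)
    rw [h1]
    have h2 : (∫⁻ t in Ioc (0:ℝ) a, μ.rnDeriv volume t) ≤ μ (Ioc 0 a) :=
      Measure.setLIntegral_rnDeriv_le _
    calc (∫⁻ t in Ioc (0:ℝ) a, μ.rnDeriv volume t).toReal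
        ≤ (μ (Ioc 0 a)).toReal := ENNReal.toReal_mono (by simp [hμIoc]) h2
      _ = ψ a := by
          rw [hμIoc, ENNReal.toReal_ofReal]
          calc (0:ℝ) = ψ 0 := hψ0.symm
            _ ≤ ψ a := hmono 0 a le_rfl ha

def Bdd {S : Type*} (h : S → ℝ) : Prop := ∃ M, ∀ u, |h u| ≤ M

section Aux

set_option linter.unusedSectionVars false

variable {S : Type*} [Nonempty S] {h k ℓ : S → ℝ} {ψ : ℝ → ℝ}

lemma psi_zero (hψ : PsiClass ψ) : ψ 0 = 0 := (hψ.2.2.2.2 0 le_rfl).mpr rfl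

lemma psi_nonneg (hψ : PsiClass ψ) {t : ℝ} (ht : 0 ≤ t) : 0 ≤ ψ t := by
  rcases eq_or_lt_of_le ht with h | h
  · rw [← h, psi_zero hψ]
  · exact le_trans h.le (hψ.2.2.2.1 t h)

lemma le_psi (hψ : PsiClass ψ) {t : ℝ} (ht : 0 ≤ t) : t ≤ ψ t := by
  rcases eq_or_lt_of_le ht with h | h
  · rw [← h, psi_zero hψ]
  · exact hψ.2.2.2.1 t h

lemma psi_max (hψ : PsiClass ψ) {a b : ℝ} (ha : 0 ≤ a) (hb : 0 ≤ b) :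
    ψ (max a b) = max (ψ a) (ψ b) := by
  rcases le_total a b with h | h
  · rw [max_eq_right h, max_eq_right (hψ.2.1 a b ha h)]
  · rw [max_eq_left h, max_eq_left (hψ.2.1 b a hb h)]

lemma resolve {r p q : ℝ} (hr : 0 ≤ r) (hr1 : r < 1) (hp : 0 ≤ p) (hq : 0 ≤ q)
    (h : q ≤ r * max p q) : q ≤ r * p := by
  rcases max_cases p q with ⟨he, _⟩ | ⟨he, hle⟩
  · rwa [he] at h
  · rw [he] at h
    have hq0 : q ≤ 0 := by nlinarith
    have : q = 0 := le_antisymm hq0 hq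
    rw [this]; positivity

lemma bddAbove_absdiff (hb : Bdd h) (lb : Bdd ℓ) :
    BddAbove (range fun x => |h x - ℓ x|) := by
  obtain ⟨M, hM⟩ := hb; obtain ⟨N, hN⟩ := lb
  refine ⟨M + N, ?_⟩
  rintro t ⟨x, rfl⟩
  calc |h x - ℓ x| ≤ |h x| + |ℓ x| := abs_sub _ _
    _ ≤ M + N := add_le_add (hM x) (hN x)

lemma le_supDist (hb : Bdd h) (lb : Bdd ℓ) (x : S) : |h x - ℓ x| ≤ supDist h ℓ :=
  le_ciSup (bddAbove_absdiff hb lb) x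

lemma supDist_le {c : ℝ} (hc : ∀ x, |h x - ℓ x| ≤ c) : supDist h ℓ ≤ c := ciSup_le hc

lemma supDist_nonneg (hb : Bdd h) (lb : Bdd ℓ) : 0 ≤ supDist h ℓ :=
  le_trans (abs_nonneg _) (le_supDist hb lb (Classical.arbitrary S))

lemma supDist_comm : supDist h ℓ = supDist ℓ h := by
  unfold supDist; congr 1; funext x; rw [abs_sub_comm]

lemma supDist_self : supDist h h = 0 := by
  unfold supDist; simp

lemma supDist_triangle (hb : Bdd h) (kb : Bdd k) (lb : Bdd ℓ) :
    supDist h ℓ ≤ supDist h k + supDist k ℓ := by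
  apply supDist_le
  intro x
  calc |h x - ℓ x| ≤ |h x - k x| + |k x - ℓ x| := abs_sub_le _ _ _
    _ ≤ _ := add_le_add (le_supDist hb kb x) (le_supDist kb lb x)

lemma eq_of_supDist_nonpos (hb : Bdd h) (lb : Bdd ℓ) (hd : supDist h ℓ ≤ 0) : h = ℓ := by
  funext x
  have h1 := (le_supDist hb lb x).trans hd
  have h2 : h x - ℓ x = 0 := abs_eq_zero.mp (le_antisymm h1 (abs_nonneg _))
  linarith

lemma psiTend (hψ : PsiClass ψ) {v : ℕ → ℝ} {c : ℝ} (hc : 0 ≤ c) (hv : ∀ n, 0 ≤ v n)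
    (hlim : Tendsto v atTop (𝓝 c)) :
    Tendsto (fun n => ψ (v n)) atTop (𝓝 (ψ c)) := by
  have h1 : Tendsto v atTop (𝓝[Ici 0] c) :=
    tendsto_nhdsWithin_of_tendsto_nhds_of_eventually_within v hlim
      (Eventually.of_forall hv)
  exact (hψ.2.2.1 c (mem_Ici.mpr hc)).tendsto.comp h1

end Aux

set_option maxHeartbeats 2000000 in
theorem stmt_11 {S D : Type*} [Nonempty S] [Nonempty D]
    (g : S → D → ℝ) (G : S → D → ℝ → ℝ) (T : S → D → S)
    (hg : ∃ M, ∀ x y, |g x y| ≤ M) (hG : ∃ M, ∀ x y t, |G x y t| ≤ M)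
    (A : (S → ℝ) → (S → ℝ))
    (hA : ∀ h : S → ℝ, ∀ x : S, A h x = ⨆ y : D, (g x y + G x y (h (T x y))))
    (r : ℝ) (hr : 0 ≤ r) (hr1 : r < 1) (ψ : ℝ → ℝ) (hψ : PsiClass ψ)
    (hyp : ∀ h ℓ : S → ℝ, (∃ M, ∀ u, |h u| ≤ M) → (∃ M, ∀ u, |ℓ u| ≤ M) →
      phi r * psint ψ (supDist h (A h)) ≤ ψ (supDist h ℓ) →
      ∀ x : S, ∀ y : D,
        ψ (|G x y (h (T x y)) - G x y (ℓ (T x y))|) ≤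
          r * max (max (psint ψ (supDist h ℓ)) (psint ψ (supDist h (A h))))
                  (max (psint ψ (supDist ℓ (A ℓ)))
                       (psint ψ ((supDist h (A ℓ) + supDist ℓ (A h)) / 2)))) :
    ∃! f : S → ℝ, (∃ M, ∀ u, |f u| ≤ M) ∧
      ∀ x : S, f x = ⨆ y : D, (g x y + G x y (f (T x y))) := by
  classical
  obtain ⟨Mg, hMg⟩ := hg
  obtain ⟨MG, hMG⟩ := hG
  set B := Mg + MG with hB
  have hbddy : ∀ (h : S → ℝ) (x : S),
      BddAbove (range fun y => g x y + G x y (h (T x y))) := by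
    intro h x
    refine ⟨B, ?_⟩
    rintro t ⟨y, rfl⟩
    exact add_le_add (le_trans (le_abs_self _) (hMg x y))
      (le_trans (le_abs_self _) (hMG x y _))
  have hAB : ∀ (h : S → ℝ) (x : S), |A h x| ≤ B := by
    intro h x
    rw [hA, abs_le]
    constructor
    · refine le_trans ?_ (le_ciSup (hbddy h x) (Classical.arbitrary D))
      have h1 := (abs_le.mp (hMg x (Classical.arbitrary D))).1
      have h2 := (abs_le.mp (hMG x (Classical.arbitrary D) (h (T x (Classical.arbitrary D))))).1
      simp only [hB]; linarith
    · exact ciSup_le fun y => add_le_add (le_trans (le_abs_self _) (hMg x y))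
        (le_trans (le_abs_self _) (hMG x y _))
  have hABdd : ∀ h : S → ℝ, Bdd (A h) := fun h => ⟨B, hAB h⟩
  have habsAdiff : ∀ (h ℓ : S → ℝ) (x : S) (c : ℝ),
      (∀ y, |G x y (h (T x y)) - G x y (ℓ (T x y))| ≤ c) → |A h x - A ℓ x| ≤ c := by
    intro h ℓ x c hc
    rw [hA, hA, abs_sub_le_iff]
    constructor
    · have hle : (⨆ y, g x y + G x y (h (T x y))) ≤ (⨆ y, g x y + G x y (ℓ (T x y))) + c := by
        refine ciSup_le fun y => ?_
        have h1 := (abs_le.mp (hc y)).2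
        calc g x y + G x y (h (T x y)) ≤ (g x y + G x y (ℓ (T x y))) + c := by linarith
          _ ≤ _ := add_le_add_left (le_ciSup (hbddy ℓ x) y) c
      linarith
    · have hle : (⨆ y, g x y + G x y (ℓ (T x y))) ≤ (⨆ y, g x y + G x y (h (T x y))) + c := by
        refine ciSup_le fun y => ?_
        have h1 := (abs_le.mp (hc y)).1
        calc g x y + G x y (ℓ (T x y)) ≤ (g x y + G x y (h (T x y))) + c := by linarith
          _ ≤ _ := add_le_add_left (le_ciSup (hbddy h x) y) c
      linarith
  -- the key contraction estimate
  have key : ∀ h ℓ : S → ℝ, Bdd h → Bdd ℓ →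
      phi r * psint ψ (supDist h (A h)) ≤ ψ (supDist h ℓ) →
      ψ (supDist (A h) (A ℓ)) ≤
        r * max (max (ψ (supDist h ℓ)) (ψ (supDist h (A h))))
            (max (ψ (supDist ℓ (A ℓ))) (ψ ((supDist h (A ℓ) + supDist ℓ (A h)) / 2))) := by
    intro h ℓ hb lb htrig
    have hd1 : 0 ≤ supDist h ℓ := supDist_nonneg hb lb
    have hd2 : 0 ≤ supDist h (A h) := supDist_nonneg hb (hABdd h)
    have hd3 : 0 ≤ supDist ℓ (A ℓ) := supDist_nonneg lb (hABdd ℓ)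
    have hd4 : 0 ≤ (supDist h (A ℓ) + supDist ℓ (A h)) / 2 := by
      have := supDist_nonneg hb (hABdd ℓ)
      have := supDist_nonneg lb (hABdd h)
      linarith
    set M := max (max (psint ψ (supDist h ℓ)) (psint ψ (supDist h (A h))))
        (max (psint ψ (supDist ℓ (A ℓ)))
          (psint ψ ((supDist h (A ℓ) + supDist ℓ (A h)) / 2))) with hM
    have hGd := hyp h ℓ hb lb htrig
    have hM0 : 0 ≤ M :=
      le_trans (psint_bounds hψ hd2).1 (le_trans (le_max_right _ _) (le_max_left _ _))
    have habs : ∀ (x : S) (y : D),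
        |G x y (h (T x y)) - G x y (ℓ (T x y))| ≤ r * M := by
      intro x y
      rcases eq_or_lt_of_le (abs_nonneg (G x y (h (T x y)) - G x y (ℓ (T x y)))) with h0 | h0
      · rw [← h0]; positivity
      · exact le_trans (hψ.2.2.2.1 _ h0) (hGd x y)
    have hAle : ∀ x, |A h x - A ℓ x| ≤ r * M :=
      fun x => habsAdiff h ℓ x _ (fun y => habs x y)
    set s := supDist (A h) (A ℓ) with hs
    have hs0 : 0 ≤ s := supDist_nonneg (hABdd h) (hABdd ℓ)
    have hψs : ψ s ≤ r * M := by
      have hseq : ∀ n : ℕ, ψ (max (s - 1/(n+1)) 0) ≤ r * M := by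
        intro n
        by_cases hcase : ∀ (x : S) (y : D),
            |G x y (h (T x y)) - G x y (ℓ (T x y))| ≤ s - 1/(n+1)
        · exfalso
          have h1 : s ≤ s - 1/(n+1) :=
            supDist_le (fun x => habsAdiff h ℓ x _ (fun y => hcase x y))
          have h2 : (0:ℝ) < 1/(n+1) := by positivity
          linarith
        · push_neg at hcase
          obtain ⟨x, y, hxy⟩ := hcase
          have h1 : max (s - 1/(n+1)) 0 ≤ |G x y (h (T x y)) - G x y (ℓ (T x y))| :=
            max_le hxy.le (abs_nonneg _)
          calc ψ (max (s - 1/(n+1)) 0) ≤ ψ (|G x y (h (T x y)) - G x y (ℓ (T x y))|) :=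
              hψ.2.1 _ _ (le_max_right _ _) h1
            _ ≤ r * M := hGd x y
      have hTend : Tendsto (fun n : ℕ => max (s - 1/(n+1)) 0) atTop (𝓝 s) := by
        have h1 : Tendsto (fun n : ℕ => s - 1/((n:ℝ)+1)) atTop (𝓝 (s - 0)) :=
          tendsto_const_nhds.sub tendsto_one_div_add_atTop_nhds_zero_nat
        have h2 := h1.max (tendsto_const_nhds (x := (0:ℝ)))
        rw [sub_zero, max_eq_left hs0] at h2
        exact h2
      exact le_of_tendsto (psiTend hψ hs0 (fun n => le_max_right _ _) hTend)
        (Eventually.of_forall hseq)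
    refine hψs.trans (mul_le_mul_of_nonneg_left ?_ hr)
    exact max_le_max
      (max_le_max (psint_bounds hψ hd1).2 (psint_bounds hψ hd2).2)
      (max_le_max (psint_bounds hψ hd3).2 (psint_bounds hψ hd4).2)
  -- the trigger holds automatically when d(h, Ah) ≤ d(h, ℓ)
  have phile : phi r ≤ 1 ∧ 0 ≤ phi r := by
    unfold phi; split <;> constructor <;> linarith
  have trig : ∀ h ℓ : S → ℝ, Bdd h → Bdd ℓ → supDist h (A h) ≤ supDist h ℓ →
      phi r * psint ψ (supDist h (A h)) ≤ ψ (supDist h ℓ) := by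
    intro h ℓ hb lb hle
    have h0 : 0 ≤ supDist h (A h) := supDist_nonneg hb (hABdd h)
    calc phi r * psint ψ (supDist h (A h)) ≤ 1 * psint ψ (supDist h (A h)) :=
        mul_le_mul_of_nonneg_right phile.1 (psint_bounds hψ h0).1
      _ = psint ψ (supDist h (A h)) := one_mul _
      _ ≤ ψ (supDist h (A h)) := (psint_bounds hψ h0).2
      _ ≤ ψ (supDist h ℓ) := hψ.2.1 _ _ h0 hle
  -- iteration: ψ d(Ah, A²h) ≤ r ψ d(h, Ah)
  have iter : ∀ h : S → ℝ, Bdd h →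
      ψ (supDist (A h) (A (A h))) ≤ r * ψ (supDist h (A h)) := by
    intro h hb
    have hk := key h (A h) hb (hABdd h) (trig h (A h) hb (hABdd h) le_rfl)
    rw [supDist_self] at hk
    have hd2 : 0 ≤ supDist h (A h) := supDist_nonneg hb (hABdd h)
    have hd5 : 0 ≤ supDist (A h) (A (A h)) := supDist_nonneg (hABdd h) (hABdd (A h))
    set p := ψ (supDist h (A h)) with hp
    set q := ψ (supDist (A h) (A (A h))) with hq
    have hp0 : 0 ≤ p := psi_nonneg hψ hd2
    have hq0 : 0 ≤ q := psi_nonneg hψ hd5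
    have hlast : ψ ((supDist h (A (A h)) + 0) / 2) ≤ max p q := by
      have htr := supDist_triangle hb (hABdd h) (hABdd (A h))
      have h1 : (supDist h (A (A h)) + 0) / 2 ≤
          max (supDist h (A h)) (supDist (A h) (A (A h))) := by
        have h2 := le_max_left (supDist h (A h)) (supDist (A h) (A (A h)))
        have h3 := le_max_right (supDist h (A h)) (supDist (A h) (A (A h)))
        linarith
      calc ψ ((supDist h (A (A h)) + 0) / 2)
          ≤ ψ (max (supDist h (A h)) (supDist (A h) (A (A h)))) := by
            apply hψ.2.1 _ _ ?_ h1
            have := supDist_nonneg hb (hABdd (A h))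
            linarith
        _ = max p q := psi_max hψ hd2 hd5
    have hcomb : max (max p p) (max q (ψ ((supDist h (A (A h)) + 0) / 2))) ≤ max p q := by
      apply max_le
      · exact le_trans (max_self p).le (le_max_left p q)
      · exact max_le (le_max_right p q) hlast
    have hfin : q ≤ r * max p q :=
      le_trans hk (mul_le_mul_of_nonneg_left hcomb hr)
    exact resolve hr hr1 hp0 hq0 hfin
  have hB0 : 0 ≤ B := add_nonneg
    (le_trans (abs_nonneg _) (hMg (Classical.arbitrary S) (Classical.arbitrary D)))
    (le_trans (abs_nonneg _) (hMG (Classical.arbitrary S) (Classical.arbitrary D) 0))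
  -- the iteration sequence
  set h0 : S → ℝ := fun _ => 0 with hh0
  have h0Bdd : Bdd h0 := ⟨0, fun u => by simp [hh0]⟩
  set seq : ℕ → (S → ℝ) := fun n => A^[n] h0 with hseqdef
  have hseqS : ∀ n, seq (n+1) = A (seq n) := fun n => Function.iterate_succ_apply' A n h0
  have hseqB : ∀ n, Bdd (seq n) := by
    intro n
    cases n with
    | zero => exact h0Bdd
    | succ m => rw [hseqS]; exact hABdd _
  have hseqB' : ∀ n x, |seq n x| ≤ B := by
    intro n x
    cases n with
    | zero => simpa [hseqdef, hh0] using hB0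
    | succ m => rw [hseqS]; exact hAB _ x
  set dseq : ℕ → ℝ := fun n => supDist (seq n) (seq (n+1)) with hdseq
  have hd0 : ∀ n, 0 ≤ dseq n := fun n => supDist_nonneg (hseqB n) (hseqB (n+1))
  set C := ψ (dseq 0) with hC
  have hC0 : 0 ≤ C := psi_nonneg hψ (hd0 0)
  have hgeo : ∀ n, ψ (dseq n) ≤ C * r^n := by
    intro n
    induction n with
    | zero => simp [hC]
    | succ m ih =>
      have h1 : ψ (dseq (m+1)) ≤ r * ψ (dseq m) := by
        have h2 := iter (seq m) (hseqB m)
        rw [← hseqS m] at h2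
        rw [← hseqS (m+1)] at h2
        exact h2
      calc ψ (dseq (m+1)) ≤ r * ψ (dseq m) := h1
        _ ≤ r * (C * r^m) := mul_le_mul_of_nonneg_left ih hr
        _ = C * r^(m+1) := by ring
  have hdgeo : ∀ n, dseq n ≤ C * r^n := fun n => le_trans (le_psi hψ (hd0 n)) (hgeo n)
  have hdistb : ∀ (x : S) (n : ℕ), dist (seq n x) (seq (n+1) x) ≤ C * r^n := by
    intro x n
    rw [Real.dist_eq]
    exact le_trans (le_supDist (hseqB n) (hseqB (n+1)) x) (hdgeo n)
  have hz : ∀ x, ∃ L, Tendsto (fun n => seq n x) atTop (𝓝 L) := fun x =>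
    cauchySeq_tendsto_of_complete (cauchySeq_of_le_geometric r C hr1 (hdistb x))
  choose z hzt using hz
  have hzB : ∀ x, |z x| ≤ B := by
    intro x
    have h1 : Tendsto (fun n => |seq n x|) atTop (𝓝 |z x|) :=
      (continuous_abs.tendsto _).comp (hzt x)
    exact le_of_tendsto h1 (Eventually.of_forall fun n => hseqB' n x)
  have hzBdd : Bdd z := ⟨B, hzB⟩
  set useq : ℕ → ℝ := fun n => supDist (seq n) z with huseq
  have hu0 : ∀ n, 0 ≤ useq n := fun n => supDist_nonneg (hseqB n) hzBdd
  have huB : ∀ n, useq n ≤ C * r^n / (1 - r) := by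
    intro n
    apply supDist_le
    intro x
    rw [← Real.dist_eq]
    exact dist_le_of_le_geometric_of_tendsto r C hr1 (hdistb x) (hzt x) n
  have hrTend : Tendsto (fun n : ℕ => C * r^n / (1-r)) atTop (𝓝 0) := by
    have h2 : Tendsto (fun n : ℕ => r^n) atTop (𝓝 (0:ℝ)) :=
      tendsto_pow_atTop_nhds_zero_of_lt_one hr hr1
    have h3 := (h2.const_mul C).div_const (1-r)
    simpa using h3
  have huTend : Tendsto useq atTop (𝓝 0) := squeeze_zero hu0 huB hrTend
  have hdTend : Tendsto (fun n => dseq n) atTop (𝓝 0) := by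
    apply squeeze_zero hd0 hdgeo
    have h2 : Tendsto (fun n : ℕ => r^n) atTop (𝓝 (0:ℝ)) :=
      tendsto_pow_atTop_nhds_zero_of_lt_one hr hr1
    simpa using h2.const_mul C
  -- the key estimate relating the limit z to arbitrary bounded w
  have star : ∀ w : S → ℝ, Bdd w → 0 < supDist z w →
      ψ (supDist z (A w)) ≤ r * max (ψ (supDist z w)) (ψ (supDist w (A w))) := by
    intro w wB hppos
    set p := supDist z w with hpd
    set q := supDist z (A w) with hqd
    set q' := supDist w (A w) with hq'd
    have hp0 : 0 ≤ p := hppos.le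
    have hq0 : 0 ≤ q := supDist_nonneg hzBdd (hABdd w)
    have hq'0 : 0 ≤ q' := supDist_nonneg wB (hABdd w)
    have h3 : (0:ℝ) < p/3 := by linarith
    have hev : ∀ᶠ n in atTop, ψ q ≤ ψ (useq (n+1)) +
        r * max (max (ψ (useq n + p)) (ψ (dseq n)))
            (max (ψ q') (ψ ((useq n + q + p + useq (n+1))/2))) := by
      filter_upwards [hdTend.eventually (gt_mem_nhds h3),
        huTend.eventually (gt_mem_nhds h3)] with n hdn hun
      have edn : dseq n = supDist (seq n) (seq (n+1)) := rfl
      have eun : useq n = supDist (seq n) z := rfl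
      have eun1 : useq (n+1) = supDist (seq (n+1)) z := rfl
      have hA1 : supDist (seq n) (A (seq n)) ≤ supDist (seq n) w := by
        rw [← hseqS n]
        have t1 : p ≤ supDist z (seq n) + supDist (seq n) w :=
          supDist_triangle hzBdd (hseqB n) wB
        have t2 : supDist z (seq n) = supDist (seq n) z := supDist_comm
        rw [← edn]
        linarith [hdn.le, hun.le, eun ▸ (t2 ▸ t1)]
      have hk := key (seq n) w (hseqB n) wB (trig (seq n) w (hseqB n) wB hA1)
      rw [← hseqS n] at hk
      have c1 : q ≤ useq (n+1) + supDist (seq (n+1)) (A w) := by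
        have t1 := supDist_triangle hzBdd (hseqB (n+1)) (hABdd w)
        have t2 : supDist z (seq (n+1)) = supDist (seq (n+1)) z := supDist_comm
        rw [hqd, eun1]
        linarith [t2 ▸ t1]
      have c2 : ψ q ≤ ψ (useq (n+1)) + ψ (supDist (seq (n+1)) (A w)) := by
        calc ψ q ≤ ψ (useq (n+1) + supDist (seq (n+1)) (A w)) := hψ.2.1 _ _ hq0 c1
          _ ≤ _ := hψ.1 _ _ (hu0 (n+1)) (supDist_nonneg (hseqB (n+1)) (hABdd w))
      have m1 : ψ (supDist (seq n) w) ≤ ψ (useq n + p) := by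
        apply hψ.2.1 _ _ (supDist_nonneg (hseqB n) wB)
        have t1 := supDist_triangle (hseqB n) hzBdd wB
        rw [eun]
        linarith
      have m2 : ψ ((supDist (seq n) (A w) + supDist w (seq (n+1)))/2) ≤
          ψ ((useq n + q + p + useq (n+1))/2) := by
        apply hψ.2.1 _ _ (div_nonneg (add_nonneg (supDist_nonneg (hseqB n) (hABdd w))
          (supDist_nonneg wB (hseqB (n+1)))) (by norm_num))
        have t1 := supDist_triangle (hseqB n) hzBdd (hABdd w)
        have t2 := supDist_triangle wB hzBdd (hseqB (n+1))
        have e1 : supDist w z = p := supDist_comm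
        have e2 : supDist z (seq (n+1)) = useq (n+1) := supDist_comm
        rw [eun]
        rw [← hqd] at t1
        rw [e1, e2] at t2
        linarith
      have hk' : ψ (supDist (seq (n+1)) (A w)) ≤
          r * max (max (ψ (useq n + p)) (ψ (dseq n)))
              (max (ψ q') (ψ ((useq n + q + p + useq (n+1))/2))) := by
        refine le_trans hk (mul_le_mul_of_nonneg_left ?_ hr)
        rw [edn]
        exact max_le_max (max_le_max m1 le_rfl) (max_le_max le_rfl m2)
      linarith
    have l1 : Tendsto (fun n => ψ (useq (n+1))) atTop (𝓝 0) := by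
      have h1 := psiTend hψ le_rfl (fun n => hu0 (n+1)) (huTend.comp (tendsto_add_atTop_nat 1))
      rwa [psi_zero hψ] at h1
    have l2 : Tendsto (fun n => ψ (useq n + p)) atTop (𝓝 (ψ p)) := by
      have h1 : Tendsto (fun n => useq n + p) atTop (𝓝 (0 + p)) :=
        huTend.add tendsto_const_nhds
      rw [zero_add] at h1
      exact psiTend hψ hp0 (fun n => add_nonneg (hu0 n) hp0) h1
    have l3 : Tendsto (fun n => ψ (dseq n)) atTop (𝓝 0) := by
      have h1 := psiTend hψ le_rfl hd0 hdTend
      rwa [psi_zero hψ] at h1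
    have l4 : Tendsto (fun n => ψ ((useq n + q + p + useq (n+1))/2)) atTop
        (𝓝 (ψ ((q+p)/2))) := by
      have h1 : Tendsto (fun n => (useq n + q + p + useq (n+1))/2) atTop
          (𝓝 ((0 + q + p + 0)/2)) :=
        (((huTend.add tendsto_const_nhds).add tendsto_const_nhds).add
          (huTend.comp (tendsto_add_atTop_nat 1))).div_const 2
      rw [show (0+q+p+(0:ℝ))/2 = (q+p)/2 by ring] at h1
      refine psiTend hψ (by linarith) (fun n => ?_) h1
      have := hu0 n; have := hu0 (n+1); linarith
    have hTendAll : Tendsto (fun n => ψ (useq (n+1)) +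
        r * max (max (ψ (useq n + p)) (ψ (dseq n)))
            (max (ψ q') (ψ ((useq n + q + p + useq (n+1))/2)))) atTop
        (𝓝 (0 + r * max (max (ψ p) 0) (max (ψ q') (ψ ((q+p)/2))))) :=
      l1.add (((l2.max l3).max (tendsto_const_nhds.max l4)).const_mul r)
    have hfinal : ψ q ≤ 0 + r * max (max (ψ p) 0) (max (ψ q') (ψ ((q+p)/2))) :=
      ge_of_tendsto hTendAll hev
    have hψp0 : 0 ≤ ψ p := psi_nonneg hψ hp0
    have hψq0 : 0 ≤ ψ q := psi_nonneg hψ hq0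
    have hψq'0 : 0 ≤ ψ q' := psi_nonneg hψ hq'0
    have hhalf : ψ ((q+p)/2) ≤ max (ψ q) (ψ p) := by
      have h1 : (q+p)/2 ≤ max q p := by
        rcases le_total q p with h | h
        · rw [max_eq_right h]; linarith
        · rw [max_eq_left h]; linarith
      calc ψ ((q+p)/2) ≤ ψ (max q p) := hψ.2.1 _ _ (by linarith) h1
        _ = max (ψ q) (ψ p) := psi_max hψ hq0 hp0
    have hb2 : max (max (ψ p) 0) (max (ψ q') (ψ ((q+p)/2))) ≤
        max (max (ψ p) (ψ q')) (ψ q) := by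
      apply max_le
      · apply max_le
        · exact le_trans (le_max_left _ _) (le_max_left _ _)
        · exact le_trans hψp0 (le_trans (le_max_left _ _) (le_max_left _ _))
      · apply max_le
        · exact le_trans (le_max_right _ _) (le_max_left _ _)
        · refine le_trans hhalf (max_le (le_max_right _ _)
            (le_trans (le_max_left _ _) (le_max_left _ _)))
    have hpre : ψ q ≤ r * max (max (ψ p) (ψ q')) (ψ q) := by
      have := mul_le_mul_of_nonneg_left hb2 hr
      linarith
    exact resolve hr hr1 (le_trans hψp0 (le_max_left _ _)) hψq0 hpre
  -- z is a fixed point of A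
  have hzfix : A z = z := by
    by_contra hne
    set δ := supDist z (A z) with hδ
    have hδpos : 0 < δ := by
      rcases eq_or_lt_of_le (supDist_nonneg hzBdd (hABdd z)) with h | h
      · exact absurd (eq_of_supDist_nonpos hzBdd (hABdd z) h.symm.le).symm hne
      · exact h
    have hδ0 : 0 ≤ δ := hδpos.le
    have hψδpos : 0 < ψ δ := by
      rcases eq_or_lt_of_le (psi_nonneg hψ hδ0) with h | h
      · exact absurd ((hψ.2.2.2.2 δ hδ0).mp h.symm) (ne_of_gt hδpos)
      · exact h
    set kseq : ℕ → (S → ℝ) := fun n => A^[n] z with hkdef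
    have hk0 : kseq 0 = z := rfl
    have hkS : ∀ n, kseq (n+1) = A (kseq n) := fun n => Function.iterate_succ_apply' A n z
    have hkB : ∀ n, Bdd (kseq n) := by
      intro n
      cases n with
      | zero => exact hzBdd
      | succ m => rw [hkS]; exact hABdd _
    have he0 : ∀ n, (0:ℝ) ≤ supDist (kseq n) (kseq (n+1)) :=
      fun n => supDist_nonneg (hkB n) (hkB (n+1))
    have hc0 : ∀ n, (0:ℝ) ≤ supDist z (kseq n) := fun n => supDist_nonneg hzBdd (hkB n)
    have ek1 : kseq 1 = A z := by rw [hkS 0, hk0]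
    have he1 : supDist (kseq 0) (kseq 1) = δ := by rw [hk0, ek1]
    have e1δ : supDist z (kseq 1) = δ := by rw [ek1]
    have hiter' : ∀ n, ψ (supDist (kseq (n+1)) (kseq (n+2))) ≤
        r * ψ (supDist (kseq n) (kseq (n+1))) := by
      intro n
      have h1 := iter (kseq n) (hkB n)
      rw [← hkS n] at h1
      rw [← hkS (n+1)] at h1
      exact h1
    have hegeo : ∀ n, ψ (supDist (kseq n) (kseq (n+1))) ≤ r^n * ψ δ := by
      intro n
      induction n with
      | zero => rw [he1, pow_zero, one_mul]
      | succ m ih =>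
        calc ψ (supDist (kseq (m+1)) (kseq (m+2))) ≤
            r * ψ (supDist (kseq m) (kseq (m+1))) := hiter' m
          _ ≤ r * (r^m * ψ δ) := mul_le_mul_of_nonneg_left ih hr
          _ = r^(m+1) * ψ δ := by ring
    have hcase : (∃ n, 1 ≤ n ∧ supDist z (kseq n) ≤ 0) ∨
        (∀ n, 1 ≤ n → 0 < supDist z (kseq n)) := by
      by_cases hx : ∀ n, 1 ≤ n → 0 < supDist z (kseq n)
      · right; exact hx
      · left; push_neg at hx
        obtain ⟨n, hn1, hn2⟩ := hx
        exact ⟨n, hn1, hn2⟩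
    rcases hcase with ⟨n, hn1, hcn⟩ | hcall
    · -- kseq n = z, so z is periodic, contradiction
      have hzk : z = kseq n := eq_of_supDist_nonpos hzBdd (hkB n) hcn
      have heδ : supDist (kseq n) (kseq (n+1)) = δ := by
        rw [hkS n, ← hzk]
      have h2 : ψ δ ≤ r^n * ψ δ := heδ ▸ hegeo n
      have h3 : r^n ≤ r := pow_le_of_le_one hr hr1.le (by omega)
      have h4 : r^n * ψ δ ≤ r * ψ δ := mul_le_mul_of_nonneg_right h3 (psi_nonneg hψ hδ0)
      nlinarith
    · -- all cseq n > 0 for n ≥ 1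
      have hcgeo : ∀ m, ψ (supDist z (kseq (m+1))) ≤ r^m * ψ δ := by
        intro m
        induction m with
        | zero => rw [e1δ, pow_zero, one_mul]
        | succ m ih =>
          have hstar := star (kseq (m+1)) (hkB (m+1)) (hcall (m+1) (by omega))
          rw [← hkS (m+1)] at hstar
          have hb1 : ψ (supDist (kseq (m+1)) (kseq (m+2))) ≤ r^m * ψ δ := by
            refine le_trans (hegeo (m+1)) ?_
            have h5 : r^(m+1) ≤ r^m := pow_le_pow_of_le_one hr hr1.le (by omega)
            exact mul_le_mul_of_nonneg_right h5 (psi_nonneg hψ hδ0)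
          calc ψ (supDist z (kseq (m+2))) ≤
              r * max (ψ (supDist z (kseq (m+1)))) (ψ (supDist (kseq (m+1)) (kseq (m+2)))) := hstar
            _ ≤ r * (r^m * ψ δ) := mul_le_mul_of_nonneg_left (max_le ih hb1) hr
            _ = r^(m+1) * ψ δ := by ring
      have hcb : ∀ m, supDist z (kseq (m+1)) ≤ r^m * ψ δ :=
        fun m => le_trans (le_psi hψ (hc0 (m+1))) (hcgeo m)
      have hcTend : Tendsto (fun n => supDist z (kseq n)) atTop (𝓝 0) := by
        rw [← Filter.tendsto_add_atTop_iff_nat 1]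
        apply squeeze_zero (fun m => hc0 (m+1)) hcb
        have h2 := tendsto_pow_atTop_nhds_zero_of_lt_one hr hr1
        simpa using h2.mul_const (ψ δ)
      rcases lt_or_ge r (1/2) with hrhalf | hrhalf
      · -- case r < 1/2 : chain the orbit
        have hchain : ∀ n, ψ (supDist (kseq 1) (kseq (n+1))) ≤
            (∑ j ∈ Finset.range n, r^(j+1)) * ψ δ := by
          intro n
          induction n with
          | zero => simp [supDist_self, psi_zero hψ]
          | succ n ih =>
            have t1 : supDist (kseq 1) (kseq (n+2)) ≤
                supDist (kseq 1) (kseq (n+1)) + supDist (kseq (n+1)) (kseq (n+2)) :=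
              supDist_triangle (hkB 1) (hkB (n+1)) (hkB (n+2))
            have hsd0 : 0 ≤ supDist (kseq 1) (kseq (n+1)) := supDist_nonneg (hkB 1) (hkB (n+1))
            calc ψ (supDist (kseq 1) (kseq (n+2)))
                ≤ ψ (supDist (kseq 1) (kseq (n+1)) + supDist (kseq (n+1)) (kseq (n+2))) :=
                  hψ.2.1 _ _ (supDist_nonneg (hkB 1) (hkB (n+2))) t1
              _ ≤ ψ (supDist (kseq 1) (kseq (n+1))) + ψ (supDist (kseq (n+1)) (kseq (n+2))) :=
                  hψ.1 _ _ hsd0 (he0 (n+1))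
              _ ≤ (∑ j ∈ Finset.range n, r^(j+1)) * ψ δ + r^(n+1) * ψ δ :=
                  add_le_add ih (hegeo (n+1))
              _ = (∑ j ∈ Finset.range (n+1), r^(j+1)) * ψ δ := by
                  rw [Finset.sum_range_succ]; ring
        have hsum : ∀ n, (∑ j ∈ Finset.range n, r^(j+1)) ≤ r / (1-r) := by
          intro n
          have h1 : ∑ j ∈ Finset.range n, r^(j+1) = r * ∑ j ∈ Finset.range n, r^j := by
            rw [Finset.mul_sum]
            exact Finset.sum_congr rfl fun j _ => by ring
          have hden : (0:ℝ) < 1 - r := by linarith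
          have h2 : ∑ j ∈ Finset.range n, r^j ≤ 1/(1-r) := by
            rw [geom_sum_eq (by intro hcon; rw [hcon] at hr1; linarith) n]
            have h3 : (r^n - 1)/(r-1) = (1 - r^n)/(1-r) := by
              rw [← neg_div_neg_eq]; ring_nf
            rw [h3, div_le_div_iff₀ hden hden]
            nlinarith [pow_nonneg hr n]
          calc ∑ j ∈ Finset.range n, r^(j+1) = r * ∑ j ∈ Finset.range n, r^j := h1
            _ ≤ r * (1/(1-r)) := mul_le_mul_of_nonneg_left h2 hr
            _ = r/(1-r) := by ring
        have hrr : r/(1-r) < 1 := by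
          rw [div_lt_one (by linarith)]; linarith
        obtain ⟨n, hn⟩ := ((tendsto_pow_atTop_nhds_zero_of_lt_one hr hr1).eventually
          (gt_mem_nhds (by linarith : (0:ℝ) < 1 - r/(1-r)))).exists
        have t1 : δ ≤ supDist z (kseq (n+1)) + supDist (kseq (n+1)) (kseq 1) := by
          have h1 := supDist_triangle hzBdd (hkB (n+1)) (hkB 1)
          rw [e1δ] at h1
          exact h1
        have t2 : ψ δ ≤ ψ (supDist z (kseq (n+1))) + ψ (supDist (kseq (n+1)) (kseq 1)) := by
          calc ψ δ ≤ ψ (supDist z (kseq (n+1)) + supDist (kseq (n+1)) (kseq 1)) :=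
              hψ.2.1 _ _ hδ0 t1
            _ ≤ _ := hψ.1 _ _ (hc0 (n+1)) (supDist_nonneg (hkB (n+1)) (hkB 1))
        have t3 : ψ (supDist (kseq (n+1)) (kseq 1)) ≤ (r/(1-r)) * ψ δ := by
          rw [supDist_comm]
          exact le_trans (hchain n)
            (mul_le_mul_of_nonneg_right (hsum n) (psi_nonneg hψ hδ0))
        have t4 : ψ (supDist z (kseq (n+1))) ≤ r^n * ψ δ := hcgeo n
        have t5 : 0 < (1 - r/(1-r) - r^n) * ψ δ :=
          mul_pos (by linarith) hψδpos
        nlinarith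
      · -- case 1/2 ≤ r : Suzuki either/or argument
        have hphi : phi r = 1 - r := if_neg (not_lt.mpr hrhalf)
        have heor : ∀ n,
            (phi r * psint ψ (supDist (kseq n) (A (kseq n))) ≤ ψ (supDist (kseq n) z)) ∨
            (phi r * psint ψ (supDist (kseq (n+1)) (A (kseq (n+1)))) ≤
              ψ (supDist (kseq (n+1)) z)) := by
          intro n
          by_contra hcon
          push_neg at hcon
          obtain ⟨h1, h2⟩ := hcon
          rw [← hkS n, hphi] at h1
          rw [← hkS (n+1), hphi] at h2
          have hsub1 : ψ (supDist (kseq n) (kseq (n+1))) ≤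
              ψ (supDist (kseq n) z) + ψ (supDist (kseq (n+1)) z) := by
            have t1 : supDist (kseq n) (kseq (n+1)) ≤
                supDist (kseq n) z + supDist z (kseq (n+1)) :=
              supDist_triangle (hkB n) hzBdd (hkB (n+1))
            have e2 : supDist z (kseq (n+1)) = supDist (kseq (n+1)) z := supDist_comm
            rw [e2] at t1
            calc ψ (supDist (kseq n) (kseq (n+1))) ≤
                ψ (supDist (kseq n) z + supDist (kseq (n+1)) z) :=
                  hψ.2.1 _ _ (he0 n) t1
              _ ≤ _ := hψ.1 _ _ (supDist_nonneg (hkB n) hzBdd)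
                  (supDist_nonneg (hkB (n+1)) hzBdd)
          have hp1 : psint ψ (supDist (kseq n) (kseq (n+1))) ≤
              ψ (supDist (kseq n) (kseq (n+1))) := (psint_bounds hψ (he0 n)).2
          have hp2 : psint ψ (supDist (kseq (n+1)) (kseq (n+2))) ≤
              r * ψ (supDist (kseq n) (kseq (n+1))) :=
            le_trans (psint_bounds hψ (he0 (n+1))).2 (hiter' n)
          have e5 : (1-r) * psint ψ (supDist (kseq n) (kseq (n+1))) ≤
              (1-r) * ψ (supDist (kseq n) (kseq (n+1))) :=
            mul_le_mul_of_nonneg_left hp1 (by linarith)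
          have e6 : (1-r) * psint ψ (supDist (kseq (n+1)) (kseq (n+2))) ≤
              (1-r) * (r * ψ (supDist (kseq n) (kseq (n+1)))) :=
            mul_le_mul_of_nonneg_left hp2 (by linarith)
          nlinarith [psi_nonneg hψ (he0 n), mul_nonneg (mul_nonneg hr hr) (psi_nonneg hψ (he0 n))]
        have hfinal : ∀ n, supDist z (kseq n) ≤ δ/2 → supDist z (kseq (n+1)) ≤ δ/2 →
            r^n < 1 - r →
            (phi r * psint ψ (supDist (kseq n) (A (kseq n))) ≤ ψ (supDist (kseq n) z)) →
            False := by
          intro n hcn hcn1 hrn htr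
          have hk := key (kseq n) z (hkB n) hzBdd htr
          rw [← hkS n] at hk
          rw [← ek1] at hk
          -- hk : ψ (supDist (kseq (n+1)) (kseq 1)) ≤ r * max ...
          have b1 : ψ (supDist (kseq n) z) ≤ ψ δ := by
            apply hψ.2.1 _ _ (supDist_nonneg (hkB n) hzBdd)
            have e2 : supDist (kseq n) z = supDist z (kseq n) := supDist_comm
            rw [e2]; linarith
          have b2 : ψ (supDist (kseq n) (kseq (n+1))) ≤ ψ δ := by
            refine le_trans (hegeo n) ?_
            have h5 : r^n ≤ 1 := pow_le_one₀ hr hr1.le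
            nlinarith [psi_nonneg hψ hδ0]
          have b3 : ψ (supDist z (kseq 1)) = ψ δ := by rw [e1δ]
          have b4 : ψ ((supDist (kseq n) (kseq 1) + supDist z (kseq (n+1)))/2) ≤ ψ δ := by
            apply hψ.2.1 _ _ (div_nonneg (add_nonneg
              (supDist_nonneg (hkB n) (hkB 1)) (hc0 (n+1))) (by norm_num))
            have t5 : supDist (kseq n) (kseq 1) ≤ supDist (kseq n) z + supDist z (kseq 1) :=
              supDist_triangle (hkB n) hzBdd (hkB 1)
            have e2 : supDist (kseq n) z = supDist z (kseq n) := supDist_comm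
            rw [e2, e1δ] at t5
            linarith
          have hk2 : ψ (supDist (kseq (n+1)) (kseq 1)) ≤ r * ψ δ :=
            le_trans hk (mul_le_mul_of_nonneg_left
              (max_le (max_le b1 b2) (max_le (le_of_eq b3) b4)) hr)
          have t6 : δ ≤ supDist z (kseq (n+1)) + supDist (kseq (n+1)) (kseq 1) := by
            have h1 := supDist_triangle hzBdd (hkB (n+1)) (hkB 1)
            rw [e1δ] at h1
            exact h1
          have t7 : ψ δ ≤ ψ (supDist z (kseq (n+1))) + ψ (supDist (kseq (n+1)) (kseq 1)) := by
            calc ψ δ ≤ ψ (supDist z (kseq (n+1)) + supDist (kseq (n+1)) (kseq 1)) :=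
                hψ.2.1 _ _ hδ0 t6
              _ ≤ _ := hψ.1 _ _ (hc0 (n+1)) (supDist_nonneg (hkB (n+1)) (hkB 1))
          have t8 : ψ (supDist z (kseq (n+1))) ≤ r^n * ψ δ := hcgeo n
          have t9 := mul_pos (show (0:ℝ) < 1 - r - r^n by linarith) hψδpos
          nlinarith [t9]
        obtain ⟨N1, hN1⟩ := eventually_atTop.mp (hcTend.eventually
          (gt_mem_nhds (by linarith : (0:ℝ) < δ/2)))
        obtain ⟨N2, hN2⟩ := eventually_atTop.mp
          ((tendsto_pow_atTop_nhds_zero_of_lt_one hr hr1).eventually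
            (gt_mem_nhds (by linarith : (0:ℝ) < 1 - r)))
        obtain ⟨N, hNa, hNb⟩ : ∃ N, N1 ≤ N ∧ N2 ≤ N :=
          ⟨max N1 N2, le_max_left _ _, le_max_right _ _⟩
        rcases heor N with htr | htr
        · exact hfinal N (hN1 N hNa).le (hN1 (N+1) (by omega)).le (hN2 N hNb) htr
        · exact hfinal (N+1) (hN1 (N+1) (by omega)).le (hN1 (N+2) (by omega)).le
            (hN2 (N+1) (by omega)) htr
  -- assemble existence and uniqueness
  refine ⟨z, ⟨⟨B, hzB⟩, fun x => ?_⟩, ?_⟩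
  · rw [← hA z x]
    exact (congrFun hzfix x).symm
  · rintro f ⟨fB, hf⟩
    have hffix : A f = f := funext fun x => by rw [hA]; exact (hf x).symm
    have htrigf : phi r * psint ψ (supDist f (A f)) ≤ ψ (supDist f z) := by
      rw [hffix, supDist_self]
      have hps0 : psint ψ 0 = 0 := by
        unfold psint
        exact intervalIntegral.integral_same
      rw [hps0, mul_zero]
      exact psi_nonneg hψ (supDist_nonneg fB hzBdd)
    have hk := key f z fB hzBdd htrigf
    rw [hffix, hzfix] at hk
    rw [supDist_self] at hk
    -- hk should now read with supDist f f replaced; handle both self-terms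
    have e1 : supDist z f = supDist f z := supDist_comm
    set dfz := supDist f z with hdfz
    have hdfz0 : 0 ≤ dfz := supDist_nonneg fB hzBdd
    have hψd0 : 0 ≤ ψ dfz := psi_nonneg hψ hdfz0
    have e2 : (dfz + dfz)/2 = dfz := by ring
    rw [supDist_self, e1, e2, psi_zero hψ] at hk
    have e3 : max (max (ψ dfz) 0) (max 0 (ψ dfz)) = ψ dfz := by
      rw [max_eq_left hψd0, max_eq_right hψd0, max_self]
    rw [e3] at hk
    have h0 : ψ dfz ≤ 0 := by nlinarith
    have hdd : dfz = 0 := (hψ.2.2.2.2 dfz hdfz0).mp (le_antisymm h0 hψd0)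
    exact eq_of_supDist_nonpos fB hzBdd hdd.le
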